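/- arXiv:2312.13129 — 3 statements merged into one kernel-verified Lean document; each statement's English description precedes it below -/
import Mathlib

section
/- Let p be a prime and let M be a saturated, semiperfect commutative monoid (written additively). Then the inclusion of the units M^* into M is relatively perfect, i.e. the relative Frobenius M ⊕_{M^*,F_{M^*}} M^* → M is bijective. Concretely: (i) every m ∈ M can be written as m = p·x + y with x ∈ M and y ∈ M^*; and (ii) whenever x, x' ∈ M and y, y' ∈ M^* satisfy p·x + y = p·x' + y', there exists w ∈ M^* with x' = x + w and y = y' + p·w. -/
/-!
Existence is semiperfectness with unit part `0`. For uniqueness, `p • x + y = p • x' + y'`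
gives `p • x' = p • x + u` with `u = y - y'` a unit, so saturation divides by `p`:
`x' = x + w` for some `w`, and cancelling `p • x` gives `p • w = u`. Since a multiple of `w`
is a unit, so is `w`.
-/

theorem exists_isAddUnit_eq_add_of_nsmul_eq_nsmul_add {M : Type*} [AddCancelCommMonoid M]
    {n : ℕ} (hn : n ≠ 0) {a b u : M} (hu : IsAddUnit u) (h : n • a = n • b + u)
    (hdvd : ∃ w, a = b + w) : ∃ w, IsAddUnit w ∧ a = b + w ∧ n • w = u := by
  obtain ⟨w, rfl⟩ := hdvd
  have hnw : n • w = u := add_left_cancel (by rw [← smul_add, h])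
  exact ⟨w, (isAddUnit_nsmul_iff hn).mp (hnw ▸ hu), rfl, hnw⟩

/-- Let `p` be a prime and let `M` be a saturated, semiperfect commutative
monoid (written additively).  Saturation of a cancellative monoid `M` is expressed
elementarily: whenever an element `a - b` of the Grothendieck group has a positive multiple
lying in `M` (i.e. `n • a = n • b + m` for some `m ∈ M` and `n > 0`), it lies in `M` itself
(i.e. `a = b + m'` for some `m' ∈ M`).  Semiperfect means the Frobenius `x ↦ p • x` is
surjective.  Then the inclusion `M^* → M` of the units is relatively perfect:
(i) every `m ∈ M` can be written as `m = p • x + y` with `x ∈ M` and `y` a unit; and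
(ii) whenever `p • x + y = p • x' + y'` with `y, y'` units, there is a unit `w` with
`x' = x + w` and `y = y' + p • w`. -/
theorem saturated_semiperfect_units_relatively_perfect
    (p : ℕ) (hp : p.Prime) (M : Type*) [AddCancelCommMonoid M]
    (hsat : ∀ a b : M, ∀ n : ℕ, 0 < n →
      (∃ m : M, n • a = n • b + m) → ∃ m : M, a = b + m)
    (hsemiperfect : ∀ m : M, ∃ x : M, m = p • x) :
    (∀ m : M, ∃ x y : M, IsAddUnit y ∧ m = p • x + y) ∧
    (∀ x x' y y' : M, IsAddUnit y → IsAddUnit y' →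
      p • x + y = p • x' + y' →
      ∃ w : M, IsAddUnit w ∧ x' = x + w ∧ y = y' + p • w) := by
  refine ⟨fun m => ?_, fun x x' y y' hy hy' h => ?_⟩
  · obtain ⟨x, rfl⟩ := hsemiperfect m
    exact ⟨x, 0, isAddUnit_zero, (add_zero _).symm⟩
  · obtain ⟨v, rfl⟩ := hy'
    have hx' : p • x' = p • x + (y + ↑(-v)) := by
      rw [← add_assoc, AddUnits.eq_add_neg_iff_add_eq, h]
    obtain ⟨w, hw, hxw, hpw⟩ := exists_isAddUnit_eq_add_of_nsmul_eq_nsmul_add hp.ne_zero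
      (hy.add (-v).isAddUnit) hx' (hsat x' x p hp.pos ⟨_, hx'⟩)
    refine ⟨w, hw, hxw, ?_⟩
    rw [hpw, add_left_comm, AddUnits.add_neg, add_zero]
end

section
/- Let u : P → Q be a Kummer homomorphism of saturated commutative monoids. Then the assignment (a, b) ↦ (a + b, b̄) descends to a well-defined group isomorphism from the pushout Q^gp ⊕_{P^gp} Q^gp onto Q^gp ⊕ (Q^gp/P^gp), and this isomorphism maps the saturated pushout Q ⊕_P^sat Q isomorphically (as a monoid) onto the submonoid Q ⊕ (Q^gp/P^gp) = {(q, g) : q ∈ Q, g ∈ Q^gp/P^gp} of Q^gp ⊕ (Q^gp/P^gp). -/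
/-!
The map `(a, b) ↦ (a + b, b̄)` on `H × H` is onto `H × H/φ(G)` and its kernel is exactly
`{(φ x, -φ x)}`, so it identifies the pushout `H ⊕_G H` with `H × H/φ(G)`. If `m • ξ` is the
class of `(a, b)` with `a, b ∈ Q`, the first coordinate of the image of `ξ` has `m`-th multiple
`a + b ∈ Q`, so it lies in `Q` by saturation. Conversely, the Kummer condition makes `H/φ(G)`
torsion, so some multiple of `(q, ḡ)` is `(m • q, 0)`, the image of the class of `(m • q, 0)`.
-/

namespace AddMonoidHom

variable {G H : Type*} [AddCommGroup G] [AddCommGroup H] (φ : G →+ H)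

def pushoutToProdQuotient : H × H →+ H × (H ⧸ φ.range) :=
  (fst H H + snd H H).prod ((QuotientAddGroup.mk' φ.range).comp (snd H H))

theorem pushoutToProdQuotient_surjective : Function.Surjective φ.pushoutToProdQuotient := by
  rintro ⟨c, g⟩
  induction g using QuotientAddGroup.induction_on with
  | H b => exact ⟨(c - b, b), by simp [pushoutToProdQuotient]⟩

theorem ker_pushoutToProdQuotient : φ.pushoutToProdQuotient.ker = (φ.prod (-φ)).range := by
  ext ⟨a, b⟩
  simp only [mem_ker, pushoutToProdQuotient, prod_apply, add_apply, coe_fst, coe_snd,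
    coe_comp, Function.comp_apply, QuotientAddGroup.mk'_apply, Prod.mk_eq_zero,
    QuotientAddGroup.eq_zero_iff, mem_range, neg_apply, Prod.mk.injEq]
  constructor
  · rintro ⟨hab, x, rfl⟩
    exact ⟨-x, by rw [map_neg, eq_neg_of_add_eq_zero_left hab], by rw [map_neg, neg_neg]⟩
  · rintro ⟨x, rfl, rfl⟩
    exact ⟨add_neg_cancel _, -x, map_neg φ x⟩

noncomputable def pushoutEquivProdQuotient :
    (H × H) ⧸ (φ.prod (-φ)).range ≃+ H × (H ⧸ φ.range) :=
  (QuotientAddGroup.quotientAddEquivOfEq φ.ker_pushoutToProdQuotient.symm).trans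
    (QuotientAddGroup.quotientKerEquivOfSurjective _ φ.pushoutToProdQuotient_surjective)

theorem pushoutEquivProdQuotient_mk (a b : H) :
    φ.pushoutEquivProdQuotient (QuotientAddGroup.mk' _ (a, b)) =
      (a + b, QuotientAddGroup.mk' φ.range b) :=
  rfl

variable {Q : Type*} [AddCommMonoid Q] (ιQ : Q →+ H)

/-- The saturated pushout `Q ⊕_G^sat Q` inside the group pushout `H ⊕_G H`. -/
def saturatedPushout : Set ((H × H) ⧸ (φ.prod (-φ)).range) :=
  {ξ | ∃ m : ℕ, 0 < m ∧ ∃ a b : Q, m • ξ = QuotientAddGroup.mk' _ (ιQ a, ιQ b)}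

theorem pushoutEquivProdQuotient_image_saturatedPushout_subset
    (hsat : ∀ g : H, ∀ n : ℕ, 0 < n → (∃ a : Q, n • g = ιQ a) → ∃ a : Q, g = ιQ a) :
    φ.pushoutEquivProdQuotient '' φ.saturatedPushout ιQ ⊆ {y | y.1 ∈ Set.range ιQ} := by
  rintro _ ⟨ξ, ⟨m, hm, a, b, hmξ⟩, rfl⟩
  have hfst : m • (φ.pushoutEquivProdQuotient ξ).1 = ιQ (a + b) := by
    rw [← Prod.smul_fst, ← map_nsmul, hmξ, pushoutEquivProdQuotient_mk, map_add]
  obtain ⟨q, hq⟩ := hsat _ m hm ⟨a + b, hfst⟩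
  exact ⟨q, hq.symm⟩

theorem subset_pushoutEquivProdQuotient_image_saturatedPushout
    (htors : IsAddTorsion (H ⧸ φ.range)) :
    {y | y.1 ∈ Set.range ιQ} ⊆ φ.pushoutEquivProdQuotient '' φ.saturatedPushout ιQ := by
  rintro ⟨_, g⟩ ⟨q, rfl⟩
  obtain ⟨m, hm, hmg⟩ := isOfFinAddOrder_iff_nsmul_eq_zero.1 (htors g)
  refine ⟨φ.pushoutEquivProdQuotient.symm (ιQ q, g), ⟨m, hm, m • q, 0, ?_⟩, by simp⟩
  apply φ.pushoutEquivProdQuotient.injective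
  rw [map_nsmul, AddEquiv.apply_symm_apply, pushoutEquivProdQuotient_mk, map_nsmul, map_zero,
    add_zero, Prod.smul_mk, hmg, QuotientAddGroup.mk'_apply, QuotientAddGroup.mk_zero]

theorem pushoutEquivProdQuotient_image_saturatedPushout
    (hsat : ∀ g : H, ∀ n : ℕ, 0 < n → (∃ a : Q, n • g = ιQ a) → ∃ a : Q, g = ιQ a)
    (htors : IsAddTorsion (H ⧸ φ.range)) :
    φ.pushoutEquivProdQuotient '' φ.saturatedPushout ιQ = {y | y.1 ∈ Set.range ιQ} :=
  (φ.pushoutEquivProdQuotient_image_saturatedPushout_subset ιQ hsat).antisymm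
    (φ.subset_pushoutEquivProdQuotient_image_saturatedPushout ιQ htors)

end AddMonoidHom

theorem isAddTorsion_quotient_range_of_kummer {P Q GP GQ : Type*} [AddCommMonoid P]
    [AddCommMonoid Q] [AddCommGroup GP] [AddCommGroup GQ] {ιP : P →+ GP} {ιQ : Q →+ GQ}
    {u : P →+ Q} {ugp : GP →+ GQ}
    (hgpQ : ∀ g : GQ, ∃ a b : Q, g = ιQ a - ιQ b)
    (hkummer : ∀ q : Q, ∃ n : ℕ, 0 < n ∧ ∃ x : P, n • q = u x)
    (hugp : ∀ x : P, ugp (ιP x) = ιQ (u x)) :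
    IsAddTorsion (GQ ⧸ ugp.range) := by
  have hmk : ∀ q : Q, IsOfFinAddOrder (QuotientAddGroup.mk' ugp.range (ιQ q)) := by
    intro q
    obtain ⟨n, hn, x, hx⟩ := hkummer q
    refine isOfFinAddOrder_iff_nsmul_eq_zero.2 ⟨n, hn, ?_⟩
    rw [← map_nsmul, ← map_nsmul, hx, ← hugp, QuotientAddGroup.mk'_apply,
      QuotientAddGroup.eq_zero_iff]
    exact ⟨ιP x, rfl⟩
  intro g
  induction g using QuotientAddGroup.induction_on with
  | H g =>
    obtain ⟨a, b, rfl⟩ := hgpQ g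
    rw [sub_eq_add_neg]
    exact (hmk a).add (hmk b).neg

theorem saturated_pushout_kummer_decomposition_general
    {P Q GP GQ : Type*} [AddCancelCommMonoid P] [AddCancelCommMonoid Q]
    [AddCommGroup GP] [AddCommGroup GQ]
    (ιP : P →+ GP) (ιQ : Q →+ GQ)
    (hgpQ : ∀ g : GQ, ∃ a b : Q, g = ιQ a - ιQ b)
    (hsatQ : ∀ g : GQ, ∀ n : ℕ, 0 < n → (∃ a : Q, n • g = ιQ a) → ∃ a : Q, g = ιQ a)
    (u : P →+ Q)
    (hkummer : ∀ q : Q, ∃ n : ℕ, 0 < n ∧ ∃ x : P, n • q = u x)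
    (ugp : GP →+ GQ) (hugp : ∀ x : P, ugp (ιP x) = ιQ (u x)) :
    ∃ e : ((GQ × GQ) ⧸ (ugp.prod (-ugp)).range) ≃+ GQ × (GQ ⧸ ugp.range),
      (∀ a b : GQ,
        e (QuotientAddGroup.mk' ((ugp.prod (-ugp)).range) (a, b)) =
          (a + b, QuotientAddGroup.mk' ugp.range b)) ∧
      ⇑e '' {ξ : (GQ × GQ) ⧸ (ugp.prod (-ugp)).range |
          ∃ m : ℕ, 0 < m ∧ ∃ a b : Q,
            m • ξ = QuotientAddGroup.mk' ((ugp.prod (-ugp)).range) (ιQ a, ιQ b)} =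
        {y : GQ × (GQ ⧸ ugp.range) | y.1 ∈ Set.range ιQ} :=
  ⟨ugp.pushoutEquivProdQuotient, ugp.pushoutEquivProdQuotient_mk,
    ugp.pushoutEquivProdQuotient_image_saturatedPushout ιQ hsatQ
      (isAddTorsion_quotient_range_of_kummer hgpQ hkummer hugp)⟩

/-- Let `u : P → Q` be a Kummer homomorphism of saturated commutative
monoids.  We realize the Grothendieck groups `P^gp`, `Q^gp` as abelian groups `GP`, `GQ`
equipped with injective monoid embeddings `ιP : P →+ GP`, `ιQ : Q →+ GQ` such that every
element of the group is a difference of elements of the monoid; saturation is expressed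
via these embeddings; `ugp : GP →+ GQ` is the induced map on group completions.  The
pushout `Q^gp ⊕_{P^gp} Q^gp` is `(GQ × GQ) ⧸ {(ugp x, -ugp x)}`, and the saturated pushout
`Q ⊕_P^sat Q` is the set of classes `ξ` with `m • ξ` in the image of `Q × Q` for some
`m > 0`.  Then `(a, b) ↦ (a + b, b̄)` descends to a well-defined group isomorphism
`GQ ⊕_{GP} GQ ≃+ GQ × (GQ ⧸ P^gp)`, mapping the saturated pushout onto the submonoid
`{(q, g) : q ∈ Q, g ∈ Q^gp/P^gp}`. -/
theorem saturated_pushout_kummer_decomposition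
    {P Q GP GQ : Type*} [AddCancelCommMonoid P] [AddCancelCommMonoid Q]
    [AddCommGroup GP] [AddCommGroup GQ]
    (ιP : P →+ GP) (ιQ : Q →+ GQ)
    (hιP : Function.Injective ιP) (hιQ : Function.Injective ιQ)
    (hgpP : ∀ g : GP, ∃ a b : P, g = ιP a - ιP b)
    (hgpQ : ∀ g : GQ, ∃ a b : Q, g = ιQ a - ιQ b)
    (hsatP : ∀ g : GP, ∀ n : ℕ, 0 < n → (∃ a : P, n • g = ιP a) → ∃ a : P, g = ιP a)
    (hsatQ : ∀ g : GQ, ∀ n : ℕ, 0 < n → (∃ a : Q, n • g = ιQ a) → ∃ a : Q, g = ιQ a)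
    (u : P →+ Q) (huinj : Function.Injective u)
    (hkummer : ∀ q : Q, ∃ n : ℕ, 0 < n ∧ ∃ x : P, n • q = u x)
    (ugp : GP →+ GQ) (hugp : ∀ x : P, ugp (ιP x) = ιQ (u x)) :
    ∃ e : ((GQ × GQ) ⧸ (ugp.prod (-ugp)).range) ≃+ GQ × (GQ ⧸ ugp.range),
      (∀ a b : GQ,
        e (QuotientAddGroup.mk' ((ugp.prod (-ugp)).range) (a, b)) =
          (a + b, QuotientAddGroup.mk' ugp.range b)) ∧
      ⇑e '' {ξ : (GQ × GQ) ⧸ (ugp.prod (-ugp)).range |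
          ∃ m : ℕ, 0 < m ∧ ∃ a b : Q,
            m • ξ = QuotientAddGroup.mk' ((ugp.prod (-ugp)).range) (ιQ a, ιQ b)} =
        {y : GQ × (GQ ⧸ ugp.range) | y.1 ∈ Set.range ιQ} :=
  saturated_pushout_kummer_decomposition_general ιP ιQ hgpQ hsatQ u hkummer ugp hugp
end

section
/- Let u : P → Q be a Kummer homomorphism of saturated commutative monoids and let d ≥ 1 be an integer. Let G_d be the quotient of the abelian group (Q^gp)^{⊕d} by the subgroup {(u^gp(x_1), …, u^gp(x_d)) : x_i ∈ P^gp, x_1 + ⋯ + x_d = 0}, and let Q^{⊕_P^sat d} be the submonoid of G_d consisting of those classes ξ for which m·ξ lies in the image of Q^d for some integer m > 0. Then the assignment (a_1, …, a_d) ↦ (a_1 + ⋯ + a_d, ā_2, …, ā_d) induces a monoid isomorphism Q^{⊕_P^sat d} ≅ Q ⊕ (Q^gp/P^gp)^{d−1}. -/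
noncomputable section

/-- The homomorphism `(Fin d → GP) →+ (Fin d → GQ)` induced by `f : GP →+ GQ` applied
componentwise. -/
def compLeftHom {GP GQ : Type*} [AddCommGroup GP] [AddCommGroup GQ]
    (f : GP →+ GQ) (d : ℕ) : (Fin d → GP) →+ (Fin d → GQ) :=
  AddMonoidHom.mk' (fun v i => f (v i)) (by
    intro a b
    funext i
    simp)

/-- The "sum of the coordinates" homomorphism `(Fin d → GP) →+ GP`. -/
def sumHom (GP : Type*) [AddCommGroup GP] (d : ℕ) : (Fin d → GP) →+ GP :=
  ∑ i : Fin d, Pi.evalAddMonoidHom (fun _ => GP) i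

/-- The subgroup `{(u^gp x_1, …, u^gp x_d) : x_i ∈ P^gp, x_1 + ⋯ + x_d = 0}` of
`(Q^gp)^{⊕ d}`. -/
def diagSub {GP GQ : Type*} [AddCommGroup GP] [AddCommGroup GQ]
    (ugp : GP →+ GQ) (d : ℕ) : AddSubgroup (Fin d → GQ) :=
  AddSubgroup.map (compLeftHom ugp d) (sumHom GP d).ker

theorem sumHom_apply {GP : Type*} [AddCommGroup GP] {d : ℕ} (v : Fin d → GP) :
    sumHom GP d v = ∑ i, v i := by
  simp [sumHom, AddMonoidHom.finset_sum_apply]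

theorem mem_diagSub {GP GQ : Type*} [AddCommGroup GP] [AddCommGroup GQ]
    {ugp : GP →+ GQ} {d : ℕ} {a : Fin d → GQ} :
    a ∈ diagSub ugp d ↔ ∃ v : Fin d → GP, (∑ i, v i) = 0 ∧ ∀ i, ugp (v i) = a i := by
  constructor
  · rintro ⟨v, hv, rfl⟩
    refine ⟨v, by simpa [sumHom_apply] using hv, fun i => rfl⟩
  · rintro ⟨v, hv, h⟩
    exact ⟨v, by simpa [AddMonoidHom.mem_ker, sumHom_apply] using hv, funext h⟩

/-- Let `u : P → Q` be a Kummer homomorphism of saturated commutative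
monoids and `d = n + 1 ≥ 1`.  With `G_d := (Q^gp)^{⊕ d} ⧸ {(u^gp x_1, …, u^gp x_d) :
x_1 + ⋯ + x_d = 0}` and the saturated multiple pushout `Q^{⊕_P^sat d} ⊆ G_d` the
submonoid of classes with a positive multiple coming from `Q^d`, the assignment
`(a_1, …, a_d) ↦ (a_1 + ⋯ + a_d, ā_2, …, ā_d)` induces a monoid isomorphism
`Q^{⊕_P^sat d} ≅ Q ⊕ (Q^gp/P^gp)^{d - 1}`. -/
theorem saturated_multiple_pushout_decomposition
    {P Q GP GQ : Type*} [AddCancelCommMonoid P] [AddCancelCommMonoid Q]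
    [AddCommGroup GP] [AddCommGroup GQ]
    (ιP : P →+ GP) (ιQ : Q →+ GQ)
    (hιP : Function.Injective ιP) (hιQ : Function.Injective ιQ)
    (hgpP : ∀ g : GP, ∃ a b : P, g = ιP a - ιP b)
    (hgpQ : ∀ g : GQ, ∃ a b : Q, g = ιQ a - ιQ b)
    (hsatP : ∀ g : GP, ∀ n : ℕ, 0 < n → (∃ a : P, n • g = ιP a) → ∃ a : P, g = ιP a)
    (hsatQ : ∀ g : GQ, ∀ n : ℕ, 0 < n → (∃ a : Q, n • g = ιQ a) → ∃ a : Q, g = ιQ a)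
    (u : P →+ Q) (huinj : Function.Injective u)
    (hkummer : ∀ q : Q, ∃ n : ℕ, 0 < n ∧ ∃ x : P, n • q = u x)
    (ugp : GP →+ GQ) (hugp : ∀ x : P, ugp (ιP x) = ιQ (u x))
    (n : ℕ) :
    ∃ e : ((Fin (n + 1) → GQ) ⧸ diagSub ugp (n + 1)) ≃+
        GQ × (Fin n → GQ ⧸ ugp.range),
      (∀ a : Fin (n + 1) → GQ,
        e (QuotientAddGroup.mk' (diagSub ugp (n + 1)) a) =
          (∑ i, a i, fun j : Fin n => QuotientAddGroup.mk' ugp.range (a j.succ))) ∧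
      ⇑e '' {ξ : (Fin (n + 1) → GQ) ⧸ diagSub ugp (n + 1) |
          ∃ m : ℕ, 0 < m ∧ ∃ q : Fin (n + 1) → Q,
            m • ξ = QuotientAddGroup.mk' (diagSub ugp (n + 1)) (fun i => ιQ (q i))} =
        {y : GQ × (Fin n → GQ ⧸ ugp.range) | y.1 ∈ Set.range ιQ} := by
  classical
  -- torsion lemma: every element of GQ has a positive multiple in the image of ugp
  have htor : ∀ g : GQ, ∃ M : ℕ, 0 < M ∧ ∃ w : GP, M • g = ugp w := by
    intro g
    obtain ⟨α, β, rfl⟩ := hgpQ g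
    obtain ⟨k1, hk1, p1, hp1⟩ := hkummer α
    obtain ⟨k2, hk2, p2, hp2⟩ := hkummer β
    refine ⟨k1 * k2, Nat.mul_pos hk1 hk2, ιP (k2 • p1) - ιP (k1 • p2), ?_⟩
    have e1 : ugp (ιP (k2 • p1)) = (k1 * k2) • ιQ α :=
      calc ugp (ιP (k2 • p1)) = ιQ (u (k2 • p1)) := hugp _
        _ = ιQ (k2 • u p1) := by rw [map_nsmul]
        _ = ιQ (k2 • (k1 • α)) := by rw [hp1]
        _ = (k2 * k1) • ιQ α := by rw [smul_smul, map_nsmul]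
        _ = (k1 * k2) • ιQ α := by rw [mul_comm]
    have e2 : ugp (ιP (k1 • p2)) = (k1 * k2) • ιQ β :=
      calc ugp (ιP (k1 • p2)) = ιQ (u (k1 • p2)) := hugp _
        _ = ιQ (k1 • u p2) := by rw [map_nsmul]
        _ = ιQ (k1 • (k2 • β)) := by rw [hp2]
        _ = (k1 * k2) • ιQ β := by rw [smul_smul, map_nsmul]
    rw [map_sub, e1, e2, smul_sub]
  set φ : (Fin (n + 1) → GQ) →+ GQ × (Fin n → GQ ⧸ ugp.range) :=
    AddMonoidHom.mk' (fun a =>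
      (∑ i, a i, fun j => QuotientAddGroup.mk' ugp.range (a j.succ)))
      (by
        intro a b
        refine Prod.ext ?_ ?_
        · simp [Finset.sum_add_distrib]
        · funext j; simp) with hφdef
  have hφ : ∀ a : Fin (n + 1) → GQ,
      φ a = (∑ i, a i, fun j => QuotientAddGroup.mk' ugp.range (a j.succ)) :=
    fun a => rfl
  have hker : φ.ker = diagSub ugp (n + 1) := by
    ext a
    rw [AddMonoidHom.mem_ker, mem_diagSub]
    constructor
    · intro h
      rw [hφ, Prod.mk_eq_zero] at h
      obtain ⟨h1, h2⟩ := h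
      have h2' : ∀ j : Fin n, ∃ y : GP, ugp y = a j.succ := by
        intro j
        have h3 := congrFun h2 j
        rw [Pi.zero_apply, QuotientAddGroup.mk'_apply,
          QuotientAddGroup.eq_zero_iff] at h3
        exact h3
      choose y hy using h2'
      refine ⟨Fin.cons (-∑ j, y j) y, ?_, ?_⟩
      · rw [Fin.sum_univ_succ]
        simp [Fin.cons_succ]
      · intro i
        refine Fin.cases ?_ ?_ i
        · rw [Fin.cons_zero, map_neg, map_sum]
          have h4 : a 0 = -∑ j : Fin n, a j.succ := by
            rw [Fin.sum_univ_succ] at h1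
            exact eq_neg_of_add_eq_zero_left h1
          rw [h4]
          congr 1
          exact Finset.sum_congr rfl fun j _ => hy j
        · intro j
          rw [Fin.cons_succ]
          exact hy j
    · rintro ⟨v, hv, h⟩
      rw [hφ, Prod.mk_eq_zero]
      constructor
      · have he : ∑ i, a i = ∑ i, ugp (v i) :=
          (Finset.sum_congr rfl fun i _ => (h i).symm)
        rw [he, ← map_sum, hv, map_zero]
      · funext j
        rw [Pi.zero_apply, QuotientAddGroup.mk'_apply,
          QuotientAddGroup.eq_zero_iff]
        exact ⟨v j.succ, h j.succ⟩
  have hsurj : Function.Surjective φ := by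
    rintro ⟨g, c⟩
    choose b hb using fun j => QuotientAddGroup.mk'_surjective ugp.range (c j)
    refine ⟨Fin.cons (g - ∑ j, b j) b, ?_⟩
    rw [hφ, Prod.mk.injEq]
    constructor
    · rw [Fin.sum_univ_succ, Fin.cons_zero]
      simp [Fin.cons_succ]
    · funext j
      simp only [Fin.cons_succ]
      exact hb j
  set e := (QuotientAddGroup.quotientAddEquivOfEq hker.symm).trans
    (QuotientAddGroup.quotientKerEquivOfSurjective φ hsurj) with hedef
  have he : ∀ a : Fin (n + 1) → GQ,
      e (QuotientAddGroup.mk' (diagSub ugp (n + 1)) a) = φ a := fun a => rfl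
  refine ⟨e, fun a => (he a).trans (hφ a), ?_⟩
  ext ⟨g, c⟩
  simp only [Set.mem_image, Set.mem_setOf_eq]
  constructor
  · rintro ⟨ξ, ⟨m, hm, q, hq⟩, heq⟩
    obtain ⟨a, rfl⟩ := QuotientAddGroup.mk'_surjective (diagSub ugp (n + 1)) ξ
    rw [← map_nsmul, QuotientAddGroup.mk'_eq_mk'] at hq
    obtain ⟨z, hz, hzeq⟩ := hq
    rw [mem_diagSub] at hz
    obtain ⟨v, hv, hvz⟩ := hz
    have h5 : ∀ i : Fin (n + 1), m • a i + ugp (v i) = ιQ (q i) := by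
      intro i
      have h6 := congrFun hzeq i
      rw [Pi.add_apply, Pi.smul_apply] at h6
      rw [hvz i, h6]
    have key : m • ∑ i, a i = ιQ (∑ i, q i) := by
      rw [Finset.smul_sum, map_sum]
      calc ∑ i, m • a i
          = ∑ i, (m • a i + ugp (v i)) - ugp (∑ i, v i) := by
            rw [map_sum, Finset.sum_add_distrib]
            abel
        _ = ∑ i, ιQ (q i) := by
            rw [hv, map_zero, sub_zero]
            exact Finset.sum_congr rfl fun i _ => h5 i
    obtain ⟨r, hr⟩ := hsatQ (∑ i, a i) m hm ⟨∑ i, q i, key⟩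
    have h8 := congrArg Prod.fst heq
    rw [he, hφ] at h8
    exact ⟨r, by rw [← hr]; exact h8⟩
  · intro hy
    obtain ⟨r, hr⟩ := hy
    choose b hb using fun j => QuotientAddGroup.mk'_surjective ugp.range (c j)
    choose Mf hMf w hw using fun j => htor (b j)
    set M := ∏ j, Mf j with hMdef
    have hMpos : 0 < M := Finset.prod_pos (fun j _ => hMf j)
    set K : Fin n → ℕ := fun j => ∏ i ∈ Finset.univ.erase j, Mf i with hKdef
    have hMb : ∀ j, M • b j = ugp (K j • w j) := by
      intro j
      rw [map_nsmul, ← hw j, smul_smul, mul_comm,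
        Finset.mul_prod_erase _ _ (Finset.mem_univ j)]
    set a : Fin (n + 1) → GQ := Fin.cons (ιQ r - ∑ j, b j) b with hadef
    refine ⟨QuotientAddGroup.mk' _ a, ⟨M, hMpos, Fin.cons (M • r) 0, ?_⟩, ?_⟩
    · rw [← map_nsmul, QuotientAddGroup.mk'_eq_mk']
      refine ⟨fun i => ugp ((Fin.cons (∑ j, K j • w j)
          (fun j => -(K j • w j)) : Fin (n + 1) → GP) i), ?_, ?_⟩
      · rw [mem_diagSub]
        refine ⟨_, ?_, fun i => rfl⟩
        rw [Fin.sum_univ_succ, Fin.cons_zero]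
        simp [Fin.cons_succ]
      · funext i
        rw [Pi.add_apply, Pi.smul_apply]
        refine Fin.cases ?_ ?_ i
        · rw [Fin.cons_zero, Fin.cons_zero, hadef, Fin.cons_zero, map_sum]
          have h7 : ∑ j, ugp (K j • w j) = M • ∑ j, b j := by
            rw [Finset.smul_sum]
            exact Finset.sum_congr rfl fun j _ => (hMb j).symm
          rw [h7, smul_sub, map_nsmul]
          abel
        · intro j
          rw [Fin.cons_succ, Fin.cons_succ, hadef, Fin.cons_succ, hMb j]
          simp
    · rw [he, hφ, Prod.mk.injEq]
      constructor
      · rw [Fin.sum_univ_succ, hadef, Fin.cons_zero]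
        simp only [Fin.cons_succ]
        rw [sub_add_cancel]
        exact hr
      · funext j
        rw [hadef, Fin.cons_succ]
        exact hb j

end
end
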